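/- arXiv:1902.03852 — 2 statements merged into one kernel-verified Lean document; each statement's English description precedes it below -/
import Mathlib

section
/- Let P ⊆ nA* be a finite maximal joinless code. Then every w ∈ nA^ω has a unique initial factor in P; i.e. for every w ∈ nA^ω there exist a unique p ∈ P and a (then unique) u ∈ nA^ω such that w = p·u. -/
/-! The code `P` is finite, so its elements have bounded coordinate lengths, say at most `m`.
Maximality gives some `p ∈ P` with a join with the length-`m` truncation of `w`; both are then
coordinatewise prefixes of a common tuple, and the length bound forces `p` to be a prefix of
that truncation, hence of `w`. Conversely, two initial factors of `w` are both prefixes of a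
long enough truncation of `w`, so they have a join, and joinlessness makes them equal. -/

namespace BrinThompson

abbrev W (A : Type*) (n : ℕ) : Type _ := Fin n → List A

variable {A : Type*} {n : ℕ}

/-- Coordinatewise concatenation in `nA*`. -/
def cat (u x : W A n) : W A n := fun i => u i ++ x i

/-- `u ≤_init v` : `u` is an initial factor of `v`. -/
def initLE (u v : W A n) : Prop := ∃ x : W A n, v = cat u x

/-- `w` is the join (least upper bound) of `u` and `v` w.r.t. `≤_init`. -/
def isJoin (u v w : W A n) : Prop :=
  initLE u w ∧ initLE v w ∧ ∀ z : W A n, initLE u z → initLE v z → initLE w z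

/-- `u` and `v` have a join. -/
def HasJoin (u v : W A n) : Prop := ∃ w : W A n, isJoin u v w

/-- A joinless code: no two distinct elements have a join. -/
def JoinlessCode (S : Set (W A n)) : Prop :=
  ∀ u ∈ S, ∀ v ∈ S, u ≠ v → ¬ HasJoin u v

/-- A maximal joinless code: joinless, and every element of `nA*` has a join
with some element of the code. -/
def MaxJoinlessCode (S : Set (W A n)) : Prop :=
  JoinlessCode S ∧ ∀ x : W A n, ∃ p ∈ S, HasJoin x p

/-- The right ideal `C · nA*` generated by `C`. -/
def genIdeal (C : Set (W A n)) : Set (W A n) := {w | ∃ c ∈ C, ∃ x : W A n, w = cat c x}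

def IsRightIdeal (R : Set (W A n)) : Prop := genIdeal R = R

/-- An initial factor code: pairwise `≤_init`-incomparable set. -/
def InitFactorCode (S : Set (W A n)) : Prop :=
  ∀ u ∈ S, ∀ v ∈ S, initLE u v → u = v

/-- `A_{ε,n}`: tuples with one coordinate a single letter and the rest empty. -/
def Aeps (A : Type*) (n : ℕ) : Set (W A n) :=
  {w | ∃ i : Fin n, ∃ a : A, w i = [a] ∧ ∀ j : Fin n, j ≠ i → w j = []}

/-- `(ε)^n`, the tuple of empty strings. -/
def epsn (A : Type*) (n : ℕ) : W A n := fun _ => []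

/-- `nA^ω`: `n`-tuples of one-sided infinite sequences over `A`. -/
abbrev Winf (A : Type*) (n : ℕ) : Type _ := Fin n → ℕ → A

/-- Concatenation of a finite tuple `p ∈ nA*` with an infinite tuple `u ∈ nA^ω`. -/
def catInf (p : W A n) (u : Winf A n) : Winf A n :=
  fun i k => if h : k < (p i).length then (p i).get ⟨k, h⟩ else u i (k - (p i).length)

/-- `v` is an interior vertex of the `P`-dag: a strict initial factor of
some element of `P`. -/
def Interior (P : Set (W A n)) (v : W A n) : Prop := ∃ p ∈ P, initLE v p ∧ v ≠ p

/-- The child of `v` in direction `i`, extended by letter `a`. -/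
def child (v : W A n) (i : Fin n) (a : A) : W A n := Function.update v i (v i ++ [a])

/-- A leaf of the interior dag of `P`: an interior vertex none of whose
children is interior. -/
def InteriorLeaf (P : Set (W A n)) (v : W A n) : Prop :=
  Interior P v ∧ ∀ (i : Fin n) (a : A), ¬ Interior P (child v i a)

/-- `v_+ = (v · A_{ε,n}) ∩ P`, the set of children of `v` belonging to `P`. -/
def vplus (P : Set (W A n)) (v : W A n) : Set (W A n) :=
  {w | (∃ (i : Fin n) (a : A), w = child v i a) ∧ w ∈ P}

/-- The depth of a vertex: the sum of the coordinate lengths. -/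
def depth (v : W A n) : ℕ := ∑ i, (v i).length

/-- One-step restriction of `P` at `(p, i)`. -/
def oneStep (P : Set (W A n)) (p : W A n) (i : Fin n) : Set (W A n) :=
  (P \ {p}) ∪ {w | ∃ a : A, w = child p i a}

/-- One step in a sequence of one-step restrictions. -/
def RestrStep (P Q : Set (W A n)) : Prop := ∃ p ∈ P, ∃ i : Fin n, Q = oneStep P p i

/-- The box code `A^{k_1} × … × A^{k_n}`. -/
def box (A : Type*) {n : ℕ} (k : Fin n → ℕ) : Set (W A n) :=
  {w | ∀ i : Fin n, (w i).length = k i}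

/-- Elementwise join `P ∨ Q` of two sets, ranging over the joins that exist. -/
def setJoin (P Q : Set (W A n)) : Set (W A n) :=
  {w | ∃ p ∈ P, ∃ q ∈ Q, isJoin p q w}

/-- `ℓ(S)`: the maximum coordinate length occurring in `S`. -/
noncomputable def ell (S : Set (W A n)) : ℕ :=
  sSup {m | ∃ z ∈ S, ∃ i : Fin n, (z i).length = m}

/-- An element of `n RI^fin_A`: an injective right ideal morphism of `nA*`
whose domain code and image code are finite maximal joinless codes.
`toFun` is a total function whose values outside `Dom` are irrelevant. -/
structure RIMfin (A : Type*) (n : ℕ) where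
  Dom : Set (W A n)
  toFun : W A n → W A n
  domC : Set (W A n)
  imC : Set (W A n)
  ideal : IsRightIdeal Dom
  morph : ∀ x ∈ Dom, ∀ w : W A n, toFun (cat x w) = cat (toFun x) w
  inj : Set.InjOn toFun Dom
  domC_gen : genIdeal domC = Dom
  imC_gen : genIdeal imC = toFun '' Dom
  domC_fin : domC.Finite
  domC_max : MaxJoinlessCode domC
  imC_fin : imC.Finite
  imC_max : MaxJoinlessCode imC

/-- `ℓ(f) = max{ℓ(z) : z ∈ domC(f) ∪ imC(f)}`. -/
noncomputable def ellF (F : RIMfin A n) : ℕ := ell (F.domC ∪ F.imC)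

/-- `G` extends `F` (as partial functions). -/
def Extends (F G : RIMfin A n) : Prop :=
  F.Dom ⊆ G.Dom ∧ ∀ x ∈ F.Dom, G.toFun x = F.toFun x

/-- `F` and `G` are equal as partial functions. -/
def EquivRIM (F G : RIMfin A n) : Prop :=
  F.Dom = G.Dom ∧ ∀ x ∈ F.Dom, F.toFun x = G.toFun x

/-- `G` is a maximal extension of `F` in `n RI^fin_A`. -/
def MaxExtension (F G : RIMfin A n) : Prop :=
  Extends F G ∧ ∀ H : RIMfin A n, Extends G H → EquivRIM G H

theorem initLE_iff_forall_prefix {u v : W A n} : initLE u v ↔ ∀ i, u i <+: v i := by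
  constructor
  · rintro ⟨x, rfl⟩ i
    exact List.prefix_append _ _
  · intro h
    choose x hx using h
    exact ⟨x, funext fun i => (hx i).symm⟩

/-- Coordinatewise, two prefixes of a common word are comparable; the join takes the longer. -/
theorem hasJoin_of_initLE {u v z : W A n} (hu : initLE u z) (hv : initLE v z) : HasJoin u v := by
  classical
  rw [initLE_iff_forall_prefix] at hu hv
  refine ⟨fun i => if (u i).length ≤ (v i).length then v i else u i, ?_, ?_, ?_⟩ <;>
    simp only [initLE_iff_forall_prefix]
  · intro i
    split_ifs with h
    · exact List.prefix_of_prefix_length_le (hu i) (hv i) h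
    · exact List.prefix_refl _
  · intro i
    split_ifs with h
    · exact List.prefix_refl _
    · exact List.prefix_of_prefix_length_le (hv i) (hu i) (le_of_not_ge h)
  · intro y huy hvy i
    split_ifs
    exacts [hvy i, huy i]

theorem length_le_depth (v : W A n) (i : Fin n) : (v i).length ≤ depth v :=
  Finset.single_le_sum (f := fun j => (v j).length) (fun _ _ => Nat.zero_le _)
    (Finset.mem_univ i)

theorem catInf_apply_add_length (p : W A n) (u : Winf A n) (i : Fin n) (k : ℕ) :
    catInf p u i (k + (p i).length) = u i k := by
  simp only [catInf, dif_neg (Nat.not_lt.2 (Nat.le_add_left _ k)), Nat.add_sub_cancel]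

theorem catInf_right_injective (p : W A n) : Function.Injective (catInf p) := by
  intro u v h
  funext i k
  rw [← catInf_apply_add_length p u, ← catInf_apply_add_length p v, h]

theorem exists_catInf_eq_iff {p : W A n} {w : Winf A n} :
    (∃ u, w = catInf p u) ↔ ∀ i k (hk : k < (p i).length), (p i)[k] = w i k := by
  constructor
  · rintro ⟨u, rfl⟩ i k hk
    simp [catInf, hk]
  · intro h
    refine ⟨fun i k => w i (k + (p i).length), funext fun i => funext fun k => ?_⟩
    by_cases hk : k < (p i).length
    · simp [catInf, hk, h i k hk]
    · simp [catInf, hk, Nat.sub_add_cancel (Nat.le_of_not_lt hk)]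

def truncate (w : Winf A n) (m : ℕ) : W A n := fun i => List.ofFn fun k : Fin m => w i k

theorem exists_catInf_eq_iff_initLE_truncate {p : W A n} {w : Winf A n} {m : ℕ}
    (hm : ∀ i, (p i).length ≤ m) : (∃ u, w = catInf p u) ↔ initLE p (truncate w m) := by
  simp only [exists_catInf_eq_iff, initLE_iff_forall_prefix, List.prefix_iff_eq_take]
  refine forall_congr' fun i => ?_
  rw [List.ext_getElem_iff]
  simp [truncate, hm i]

theorem hasJoin_of_catInf_eq {p q : W A n} {u v : Winf A n} (h : catInf p u = catInf q v) :
    HasJoin p q := by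
  set m := depth p + depth q
  have hp : initLE p (truncate (catInf p u) m) :=
    (exists_catInf_eq_iff_initLE_truncate fun i => (length_le_depth p i).trans
      (Nat.le_add_right _ _)).1 ⟨u, rfl⟩
  have hq : initLE q (truncate (catInf p u) m) :=
    (exists_catInf_eq_iff_initLE_truncate fun i => (length_le_depth q i).trans
      (Nat.le_add_left _ _)).1 ⟨v, h⟩
  exact hasJoin_of_initLE hp hq

theorem JoinlessCode.eq_of_catInf_eq {P : Set (W A n)} (hP : JoinlessCode P) {p q : W A n}
    (hp : p ∈ P) (hq : q ∈ P) {u v : Winf A n} (h : catInf p u = catInf q v) : p = q := by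
  by_contra hne
  exact hP p hp q hq hne (hasJoin_of_catInf_eq h)

theorem exists_mem_catInf_eq {P : Set (W A n)} (hfin : P.Finite)
    (hP : ∀ x, ∃ p ∈ P, HasJoin x p) (w : Winf A n) : ∃ p ∈ P, ∃ u, w = catInf p u := by
  obtain ⟨m, hm⟩ := (hfin.image depth).bddAbove
  obtain ⟨p, hpP, z, hxz, hpz, -⟩ := hP (truncate w m)
  have hlen : ∀ i, (p i).length ≤ m := fun i =>
    (length_le_depth p i).trans (hm (Set.mem_image_of_mem depth hpP))
  refine ⟨p, hpP, (exists_catInf_eq_iff_initLE_truncate hlen).2 ?_⟩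
  rw [initLE_iff_forall_prefix] at hxz hpz ⊢
  exact fun i => List.prefix_of_prefix_length_le (hpz i) (hxz i) (by simpa [truncate] using hlen i)

theorem unique_initFactor_of_maxJoinless_general {A : Type*}
    {n : ℕ} (P : Set (W A n)) (hfin : P.Finite)
    (hmax : MaxJoinlessCode P) (w : Winf A n) :
    ∃! pu : W A n × Winf A n, pu.1 ∈ P ∧ w = catInf pu.1 pu.2 := by
  obtain ⟨p, hp, u, rfl⟩ := exists_mem_catInf_eq hfin hmax.2 w
  refine ⟨(p, u), ⟨hp, rfl⟩, ?_⟩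
  rintro ⟨q, v⟩ ⟨hq, h⟩
  obtain rfl := hmax.1.eq_of_catInf_eq hq hp h.symm
  rw [catInf_right_injective q h]

/-- Every `w ∈ nA^ω` has a unique initial factor in a finite maximal joinless
code `P`: there is a unique pair `(p, u)` with `p ∈ P` and `w = p·u`. -/
theorem unique_initFactor_of_maxJoinless {A : Type*} [Fintype A] [Nonempty A]
    {n : ℕ} (hn : 1 ≤ n) (P : Set (W A n)) (hfin : P.Finite)
    (hmax : MaxJoinlessCode P) (w : Winf A n) :
    ∃! pu : W A n × Winf A n, pu.1 ∈ P ∧ w = catInf pu.1 pu.2 :=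
  unique_initFactor_of_maxJoinless_general P hfin hmax w

end BrinThompson
end

section
/- For every f ∈ n RI^fin_A: f(domC(f)) = imC(f). Consequently, the inverse function f⁻¹ (defined on Im(f)) also belongs to n RI^fin_A, with domC(f⁻¹) = imC(f) and imC(f⁻¹) = domC(f). -/
namespace BrinThompson

variable {A : Type*} {n : ℕ}

/-! A joinless code is exactly the set of `≤_init`-minimal elements of the right ideal it
generates. An injective right ideal morphism `f` satisfies `x ≤_init y ↔ f x ≤_init f y` on its
domain, because `f (x·w) = f x · w`, so it carries the minimal elements of `Dom(f)` onto those of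
`Im(f)`. Its inverse is again a right ideal morphism, with the two codes exchanged. -/

lemma cat_epsn (u : W A n) : cat u (epsn A n) = u := by
  funext i; simp [cat, epsn]

lemma cat_assoc (u v w : W A n) : cat (cat u v) w = cat u (cat v w) := by
  funext i; simp [cat]

lemma initLE_cat (u x : W A n) : initLE u (cat u x) := ⟨x, rfl⟩

lemma initLE_refl (u : W A n) : initLE u u := ⟨epsn A n, (cat_epsn u).symm⟩

lemma initLE_trans {u v w : W A n} (huv : initLE u v) (hvw : initLE v w) : initLE u w := by
  obtain ⟨x, rfl⟩ := huv
  obtain ⟨y, rfl⟩ := hvw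
  exact ⟨cat x y, cat_assoc u x y⟩

lemma initLE_antisymm {u v : W A n} (huv : initLE u v) (hvu : initLE v u) : u = v := by
  obtain ⟨x, rfl⟩ := huv
  obtain ⟨y, hy⟩ := hvu
  funext i
  have hi : u i = u i ++ (x i ++ y i) := by simpa [cat] using congrFun hy i
  simp [cat, (List.append_eq_nil_iff.mp (List.self_eq_append_right.mp hi)).1]

lemma isJoin_of_initLE {u v : W A n} (h : initLE u v) : isJoin u v v :=
  ⟨h, initLE_refl v, fun _ _ hv => hv⟩

lemma JoinlessCode.initFactorCode {S : Set (W A n)} (hS : JoinlessCode S) :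
    InitFactorCode S := fun u hu v hv huv => by
  by_contra hne
  exact hS u hu v hv hne ⟨v, isJoin_of_initLE huv⟩

lemma mem_genIdeal_self {C : Set (W A n)} {c : W A n} (hc : c ∈ C) : c ∈ genIdeal C :=
  ⟨c, hc, epsn A n, (cat_epsn c).symm⟩

lemma isRightIdeal_genIdeal (C : Set (W A n)) : IsRightIdeal (genIdeal C) := by
  ext w
  constructor
  · rintro ⟨c, ⟨d, hd, x, rfl⟩, y, rfl⟩
    exact ⟨d, hd, cat x y, cat_assoc d x y⟩
  · exact mem_genIdeal_self

def initMinimals (R : Set (W A n)) : Set (W A n) :=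
  {m | m ∈ R ∧ ∀ y ∈ R, initLE y m → y = m}

lemma InitFactorCode.initMinimals_genIdeal {C : Set (W A n)} (hC : InitFactorCode C) :
    initMinimals (genIdeal C) = C := by
  ext m
  constructor
  · rintro ⟨⟨c, hc, x, rfl⟩, hmin⟩
    rwa [← hmin c (mem_genIdeal_self hc) (initLE_cat c x)]
  · intro hm
    refine ⟨mem_genIdeal_self hm, ?_⟩
    rintro _ ⟨c, hc, x, rfl⟩ hle
    have hcm : c = m := hC c hc m hm (initLE_trans (initLE_cat c x) hle)
    subst hcm
    exact initLE_antisymm hle (initLE_cat c x)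

namespace RIMfin

variable (F : RIMfin A n)

lemma cat_mem_Dom {x : W A n} (hx : x ∈ F.Dom) (w : W A n) : cat x w ∈ F.Dom := by
  rw [← F.ideal]
  exact ⟨x, hx, w, rfl⟩

lemma initLE_toFun_iff {x y : W A n} (hx : x ∈ F.Dom) (hy : y ∈ F.Dom) :
    initLE (F.toFun x) (F.toFun y) ↔ initLE x y := by
  constructor
  · rintro ⟨w, hw⟩
    rw [← F.morph x hx w] at hw
    exact ⟨w, F.inj hy (F.cat_mem_Dom hx w) hw⟩
  · rintro ⟨w, rfl⟩
    rw [F.morph x hx w]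
    exact initLE_cat _ w

lemma image_initMinimals_Dom :
    F.toFun '' initMinimals F.Dom = initMinimals (F.toFun '' F.Dom) := by
  ext m
  constructor
  · rintro ⟨x, ⟨hx, hmin⟩, rfl⟩
    refine ⟨⟨x, hx, rfl⟩, ?_⟩
    rintro _ ⟨y, hy, rfl⟩ hle
    rw [hmin y hy ((F.initLE_toFun_iff hy hx).mp hle)]
  · rintro ⟨⟨x, hx, rfl⟩, hmin⟩
    refine ⟨x, ⟨hx, fun y hy hle => ?_⟩, rfl⟩
    exact F.inj hy hx (hmin _ ⟨y, hy, rfl⟩ ((F.initLE_toFun_iff hy hx).mpr hle))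

theorem image_domC : F.toFun '' F.domC = F.imC := by
  rw [← F.domC_max.1.initFactorCode.initMinimals_genIdeal, F.domC_gen,
    image_initMinimals_Dom, ← F.imC_gen, F.imC_max.1.initFactorCode.initMinimals_genIdeal]

lemma leftInvOn_invFunOn : Set.LeftInvOn (Function.invFunOn F.toFun F.Dom) F.toFun F.Dom :=
  F.inj.leftInvOn_invFunOn

noncomputable def symm : RIMfin A n where
  Dom := F.toFun '' F.Dom
  toFun := Function.invFunOn F.toFun F.Dom
  domC := F.imC
  imC := F.domC
  ideal := by
    rw [← F.imC_gen]
    exact isRightIdeal_genIdeal F.imC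
  morph := by
    rintro _ ⟨x, hx, rfl⟩ w
    rw [← F.morph x hx w, F.leftInvOn_invFunOn (F.cat_mem_Dom hx w), F.leftInvOn_invFunOn hx]
  inj := by
    rintro _ ⟨x, hx, rfl⟩ _ ⟨y, hy, rfl⟩ h
    rw [F.leftInvOn_invFunOn hx, F.leftInvOn_invFunOn hy] at h
    rw [h]
  domC_gen := F.imC_gen
  imC_gen := by rw [F.leftInvOn_invFunOn.image_image, F.domC_gen]
  domC_fin := F.imC_fin
  domC_max := F.imC_max
  imC_fin := F.domC_fin
  imC_max := F.domC_max

lemma symm_toFun_toFun {x : W A n} (hx : x ∈ F.Dom) : F.symm.toFun (F.toFun x) = x :=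
  F.leftInvOn_invFunOn hx

lemma toFun_symm_toFun {y : W A n} (hy : y ∈ F.symm.Dom) : F.toFun (F.symm.toFun y) = y := by
  obtain ⟨x, hx, rfl⟩ := hy
  rw [F.symm_toFun_toFun hx]

end RIMfin

theorem image_domC_eq_imC_and_inverse_general {A : Type*}
    {n : ℕ} (F : RIMfin A n) :
    F.toFun '' F.domC = F.imC ∧
    ∃ G : RIMfin A n,
      G.Dom = F.toFun '' F.Dom ∧
      (∀ x ∈ F.Dom, G.toFun (F.toFun x) = x) ∧
      (∀ y ∈ G.Dom, F.toFun (G.toFun y) = y) ∧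
      G.domC = F.imC ∧ G.imC = F.domC :=
  ⟨F.image_domC, F.symm, rfl, fun _ => F.symm_toFun_toFun, fun _ => F.toFun_symm_toFun,
    rfl, rfl⟩

/-- For `f ∈ n RI^fin_A`: `f(domC(f)) = imC(f)`, and the inverse of `f` also
belongs to `n RI^fin_A`, with `domC(f⁻¹) = imC(f)` and `imC(f⁻¹) = domC(f)`. -/
theorem image_domC_eq_imC_and_inverse {A : Type*} [Fintype A] [Nonempty A]
    {n : ℕ} (hn : 1 ≤ n) (F : RIMfin A n) :
    F.toFun '' F.domC = F.imC ∧
    ∃ G : RIMfin A n,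
      G.Dom = F.toFun '' F.Dom ∧
      (∀ x ∈ F.Dom, G.toFun (F.toFun x) = x) ∧
      (∀ y ∈ G.Dom, F.toFun (G.toFun y) = y) ∧
      G.domC = F.imC ∧ G.imC = F.domC :=
  image_domC_eq_imC_and_inverse_general F

end BrinThompson
end
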